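/- (Theorem 2: uniform upper and lower bounds on Jacobian products.) Let (z_t)_{t\ge 1} be an orbit of the regularized PLRNN, i.e. z_{t+1} = F(z_t), fix t \ge 1, and suppose there is a constant c < 1 such that \|R(z_k)\|_2 \le c for all k > t. Then for every T > t the ordered product of Jacobians satisfies 1 \le \|W_\Omega(z_T)\, W_\Omega(z_{T-1}) \cdots W_\Omega(z_{t+1})\|_2 \le 1 + c + \|S\|_2/(1-c); in particular these norms are bounded above and below, uniformly in T, by finite positive constants. -/

import Mathlib

open Matrix Filter Topology

/-- The operator 2-norm (largest singular value) of a real matrix. -/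
noncomputable def opNorm2 {m n : Type*} [Fintype m] [Fintype n] [DecidableEq n]
    (A : Matrix m n ℝ) : ℝ :=
  ‖LinearMap.toContinuousLinearMap (Matrix.toEuclideanLin (𝕜 := ℝ) A)‖

/-- Euclidean norm of a real vector. -/
noncomputable def vnorm {n : Type*} [Fintype n] (v : n → ℝ) : ℝ :=
  Real.sqrt (∑ i, v i ^ 2)

/-- Componentwise ReLU. -/
noncomputable def relu {n : Type*} (z : n → ℝ) : n → ℝ := fun i => max 0 (z i)

/-- `Dmat z` is the diagonal 0–1 matrix with `(Dmat z) i i = 1` iff `z i > 0`. -/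
noncomputable def Dmat {n : Type*} [Fintype n] [DecidableEq n] (z : n → ℝ) :
    Matrix n n ℝ :=
  Matrix.diagonal (fun i => if 0 < z i then (1 : ℝ) else 0)

/-- `W_Ω(z) = A + W D(z)`. -/
noncomputable def Wom {n : Type*} [Fintype n] [DecidableEq n]
    (A W : Matrix n n ℝ) (z : n → ℝ) : Matrix n n ℝ :=
  A + W * Dmat z

/-- The deterministic, input-free PLRNN map `F(z) = A z + W φ(z) + h`. -/
noncomputable def plrnn {n : Type*} [Fintype n] [DecidableEq n]
    (A W : Matrix n n ℝ) (h : n → ℝ) (z : n → ℝ) : n → ℝ :=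
  A.mulVec z + W.mulVec (relu z) + h

/-!
Each Jacobian `W_Ω(z)` has the block form `[[1, 0], [S D_reg(z), R(z)]]` with
`‖S D_reg(z)‖₂ ≤ ‖S‖₂`, and this shape is stable under products:
`[[1, 0], [S, R]] * [[1, 0], [S', R']] = [[1, 0], [S + R S', R R']]`.
Along the orbit the lower-right blocks multiply to norm at most `c ^ (T - t) ≤ c`, while the
lower-left blocks accumulate at most the geometric series `‖S‖₂ ∑ c ^ k = ‖S‖₂ / (1 - c)`.
The upper bound is the triangle inequality over the four blocks; the lower bound holds because
the product still has a diagonal entry `1`, and entries are bounded by the operator norm.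
-/

open scoped Matrix.Norms.L2Operator

lemma opNorm2_eq_norm {m n : Type*} [Fintype m] [Fintype n] [DecidableEq n]
    (A : Matrix m n ℝ) : opNorm2 A = ‖A‖ :=
  rfl

section vnorm

variable {m n : Type*} [Fintype m] [Fintype n]

lemma vnorm_eq_norm (v : n → ℝ) : vnorm v = ‖WithLp.toLp 2 v‖ := by
  simp [vnorm, EuclideanSpace.norm_eq]

lemma vnorm_nonneg (v : n → ℝ) : 0 ≤ vnorm v :=
  Real.sqrt_nonneg _

lemma vnorm_sumElim_sq (u : m → ℝ) (w : n → ℝ) :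
    vnorm (Sum.elim u w) ^ 2 = vnorm u ^ 2 + vnorm w ^ 2 := by
  simp only [vnorm, Fintype.sum_sum_type, Sum.elim_inl, Sum.elim_inr]
  rw [Real.sq_sqrt (by positivity), Real.sq_sqrt (by positivity), Real.sq_sqrt (by positivity)]

lemma vnorm_sumElim_le (u : m → ℝ) (w : n → ℝ) :
    vnorm (Sum.elim u w) ≤ vnorm u + vnorm w := by
  nlinarith [vnorm_sumElim_sq u w, vnorm_nonneg u, vnorm_nonneg w, vnorm_nonneg (Sum.elim u w)]

lemma vnorm_add_le (u w : n → ℝ) : vnorm (u + w) ≤ vnorm u + vnorm w := by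
  simpa only [vnorm_eq_norm, WithLp.toLp_add] using norm_add_le _ _

lemma vnorm_comp_inl_le (v : m ⊕ n → ℝ) : vnorm (v ∘ Sum.inl) ≤ vnorm v := by
  have h := vnorm_sumElim_sq (v ∘ Sum.inl) (v ∘ Sum.inr)
  rw [Sum.elim_comp_inl_inr] at h
  nlinarith [vnorm_nonneg v, vnorm_nonneg (v ∘ Sum.inl)]

lemma vnorm_comp_inr_le (v : m ⊕ n → ℝ) : vnorm (v ∘ Sum.inr) ≤ vnorm v := by
  have h := vnorm_sumElim_sq (v ∘ Sum.inl) (v ∘ Sum.inr)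
  rw [Sum.elim_comp_inl_inr] at h
  nlinarith [vnorm_nonneg v, vnorm_nonneg (v ∘ Sum.inr)]

end vnorm

namespace Matrix

section L2OpNorm

variable {m n : Type*} [Fintype m] [Fintype n] [DecidableEq n]

lemma vnorm_mulVec_le (A : Matrix m n ℝ) (v : n → ℝ) : vnorm (A *ᵥ v) ≤ ‖A‖ * vnorm v := by
  rw [vnorm_eq_norm, vnorm_eq_norm]
  exact A.l2_opNorm_mulVec (WithLp.toLp 2 v)

lemma l2_opNorm_le_of_vnorm_mulVec_le (A : Matrix m n ℝ) {C : ℝ} (hC : 0 ≤ C)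
    (h : ∀ v, vnorm (A *ᵥ v) ≤ C * vnorm v) : ‖A‖ ≤ C := by
  refine ContinuousLinearMap.opNorm_le_bound _ hC fun x => ?_
  simpa [vnorm_eq_norm, toLpLin_apply] using h x.ofLp

lemma abs_apply_le_l2_opNorm (A : Matrix m n ℝ) (i : m) (j : n) : |A i j| ≤ ‖A‖ := by
  have h := A.vnorm_mulVec_le (Pi.single j 1)
  rw [mulVec_single_one, vnorm_eq_norm, vnorm_eq_norm, PiLp.toLp_single, PiLp.norm_single,
    norm_one, mul_one] at h
  exact (PiLp.norm_apply_le _ i).trans h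

lemma l2_opNorm_diagonal_le_one {d : n → ℝ} (hd : ∀ i, |d i| ≤ 1) :
    ‖diagonal d‖ ≤ 1 := by
  rw [l2_opNorm_diagonal]
  exact (pi_norm_le_iff_of_nonneg zero_le_one).mpr hd

lemma l2_opNorm_one_le : ‖(1 : Matrix n n ℝ)‖ ≤ 1 :=
  l2_opNorm_diagonal_le_one fun _ => by simp

end L2OpNorm

lemma l2_opNorm_fromBlocks_le {m₁ m₂ n₁ n₂ : Type*} [Fintype m₁] [Fintype m₂] [Fintype n₁]
    [Fintype n₂] [DecidableEq n₁] [DecidableEq n₂] (A : Matrix m₁ n₁ ℝ) (B : Matrix m₁ n₂ ℝ)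
    (C : Matrix m₂ n₁ ℝ) (D : Matrix m₂ n₂ ℝ) :
    ‖fromBlocks A B C D‖ ≤ ‖A‖ + ‖B‖ + ‖C‖ + ‖D‖ := by
  refine l2_opNorm_le_of_vnorm_mulVec_le _ (by positivity) fun v => ?_
  rw [fromBlocks_mulVec]
  calc _ ≤ vnorm (A *ᵥ (v ∘ Sum.inl) + B *ᵥ (v ∘ Sum.inr))
          + vnorm (C *ᵥ (v ∘ Sum.inl) + D *ᵥ (v ∘ Sum.inr)) := vnorm_sumElim_le _ _
    _ ≤ (‖A‖ * vnorm (v ∘ Sum.inl) + ‖B‖ * vnorm (v ∘ Sum.inr))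
          + (‖C‖ * vnorm (v ∘ Sum.inl) + ‖D‖ * vnorm (v ∘ Sum.inr)) := by
      gcongr <;>
        exact (vnorm_add_le _ _).trans (add_le_add (vnorm_mulVec_le _ _) (vnorm_mulVec_le _ _))
    _ ≤ (‖A‖ * vnorm v + ‖B‖ * vnorm v) + (‖C‖ * vnorm v + ‖D‖ * vnorm v) := by
      gcongr
      exacts [vnorm_comp_inl_le v, vnorm_comp_inr_le v, vnorm_comp_inl_le v, vnorm_comp_inr_le v]
    _ = (‖A‖ + ‖B‖ + ‖C‖ + ‖D‖) * vnorm v := by ring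

section Blocks

variable {m n : Type*}

lemma IsDiag.eq_fromBlocks_one [DecidableEq m] {A : Matrix (m ⊕ n) (m ⊕ n) ℝ} (hA : A.IsDiag)
    (hA₁₁ : ∀ i, A (Sum.inl i) (Sum.inl i) = 1) :
    A = Matrix.fromBlocks 1 0 0 A.toBlocks₂₂ := by
  have hblocks := hA
  rw [← fromBlocks_toBlocks A, isDiag_fromBlocks_iff] at hblocks
  obtain ⟨h₁₁, h₁₂, h₂₁, -⟩ := hblocks
  have hone : A.toBlocks₁₁ = 1 := by
    rw [← h₁₁.diagonal_diag, ← diagonal_one]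
    exact congrArg diagonal (funext hA₁₁)
  conv_lhs => rw [← fromBlocks_toBlocks A, hone, h₁₂, h₂₁]

lemma eq_fromBlocks_zero_zero {W : Matrix (m ⊕ n) (m ⊕ n) ℝ}
    (hW : ∀ i j, W (Sum.inl i) j = 0) : W = fromBlocks 0 0 W.toBlocks₂₁ W.toBlocks₂₂ := by
  conv_lhs => rw [← fromBlocks_toBlocks W]
  congr 1 <;> ext <;> simp [toBlocks₁₁, toBlocks₁₂, hW]

end Blocks

section BlockUnitriangular

variable {m n : Type*} [Fintype m] [Fintype n] [DecidableEq m] [DecidableEq n]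

def blockUnitriangular (s r : ℝ) : Set (Matrix (m ⊕ n) (m ⊕ n) ℝ) :=
  {M | ∃ S R, M = fromBlocks 1 0 S R ∧ ‖S‖ ≤ s ∧ ‖R‖ ≤ r}

lemma mul_mem_blockUnitriangular {M N : Matrix (m ⊕ n) (m ⊕ n) ℝ} {s r s' r' : ℝ}
    (hM : M ∈ blockUnitriangular s r) (hN : N ∈ blockUnitriangular s' r') :
    M * N ∈ blockUnitriangular (s + r * s') (r * r') := by
  obtain ⟨S, R, rfl, hS, hR⟩ := hM
  obtain ⟨S', R', rfl, hS', hR'⟩ := hN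
  have hr : 0 ≤ r := (norm_nonneg R).trans hR
  refine ⟨S + R * S', R * R', by simp [fromBlocks_multiply], ?_, ?_⟩
  · calc ‖S + R * S'‖ ≤ ‖S‖ + ‖R‖ * ‖S'‖ :=
          (norm_add_le _ _).trans (add_le_add_right (l2_opNorm_mul R S') _)
      _ ≤ s + r * s' := by gcongr
  · exact (l2_opNorm_mul R R').trans (by gcongr)

lemma list_prod_mem_blockUnitriangular {s c : ℝ} (hs : 0 ≤ s) (hc : c < 1)
    (l : List (Matrix (m ⊕ n) (m ⊕ n) ℝ)) (hl : ∀ M ∈ l, M ∈ blockUnitriangular s c) :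
    l.prod ∈ blockUnitriangular (s / (1 - c)) (c ^ l.length) := by
  have hc' : 0 < 1 - c := sub_pos.mpr hc
  induction l with
  | nil =>
    exact ⟨0, 1, fromBlocks_one.symm, by simpa using div_nonneg hs hc'.le, by
      simpa using l2_opNorm_one_le⟩
  | cons M l ih =>
    have h := mul_mem_blockUnitriangular (hl M List.mem_cons_self)
      (ih fun N hN => hl N (List.mem_cons_of_mem M hN))
    rwa [show s + c * (s / (1 - c)) = s / (1 - c) by field_simp; ring, ← pow_succ'] at h

lemma one_le_l2_opNorm_of_mem_blockUnitriangular [Nonempty m] {M : Matrix (m ⊕ n) (m ⊕ n) ℝ}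
    {s r : ℝ} (hM : M ∈ blockUnitriangular s r) : 1 ≤ ‖M‖ := by
  obtain ⟨S, R, rfl, -, -⟩ := hM
  obtain ⟨i⟩ := ‹Nonempty m›
  simpa using abs_apply_le_l2_opNorm (fromBlocks 1 0 S R) (Sum.inl i) (Sum.inl i)

lemma l2_opNorm_le_of_mem_blockUnitriangular {M : Matrix (m ⊕ n) (m ⊕ n) ℝ} {s r : ℝ}
    (hM : M ∈ blockUnitriangular s r) : ‖M‖ ≤ 1 + r + s := by
  obtain ⟨S, R, rfl, hS, hR⟩ := hM
  calc ‖fromBlocks 1 0 S R‖ ≤ ‖(1 : Matrix m m ℝ)‖ + ‖(0 : Matrix m n ℝ)‖ + ‖S‖ + ‖R‖ :=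
        l2_opNorm_fromBlocks_le _ _ _ _
    _ ≤ 1 + 0 + s + r := by gcongr <;> simp [l2_opNorm_one_le]
    _ = 1 + r + s := by ring

end BlockUnitriangular

end Matrix

section RegularizedPLRNN

variable {m n : Type*} [Fintype m] [Fintype n] [DecidableEq m] [DecidableEq n]

lemma Dmat_eq_fromBlocks (z : m ⊕ n → ℝ) :
    Dmat z = fromBlocks (Dmat (z ∘ Sum.inl)) 0 0 (Dmat (z ∘ Sum.inr)) := by
  rw [Dmat, Dmat, Dmat, fromBlocks_diagonal]
  congr 1
  ext (i | i) <;> rfl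

lemma l2_opNorm_Dmat_le (z : n → ℝ) : ‖Dmat z‖ ≤ 1 :=
  l2_opNorm_diagonal_le_one fun i => by split_ifs <;> simp

variable {A W : Matrix (m ⊕ n) (m ⊕ n) ℝ}

lemma Wom_eq_fromBlocks (hA : A.IsDiag) (hAreg : ∀ i, A (Sum.inl i) (Sum.inl i) = 1)
    (hWreg : ∀ i j, W (Sum.inl i) j = 0) (z : m ⊕ n → ℝ) :
    Wom A W z = fromBlocks 1 0 (W.toBlocks₂₁ * Dmat (z ∘ Sum.inl))
      (A.toBlocks₂₂ + W.toBlocks₂₂ * Dmat (z ∘ Sum.inr)) := by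
  conv_lhs =>
    rw [Wom, Dmat_eq_fromBlocks, hA.eq_fromBlocks_one hAreg, eq_fromBlocks_zero_zero hWreg]
  simp [fromBlocks_multiply, fromBlocks_add]

lemma Wom_mem_blockUnitriangular (hA : A.IsDiag) (hAreg : ∀ i, A (Sum.inl i) (Sum.inl i) = 1)
    (hWreg : ∀ i j, W (Sum.inl i) j = 0) {z : m ⊕ n → ℝ} {r : ℝ}
    (hr : ‖(Wom A W z).toBlocks₂₂‖ ≤ r) :
    Wom A W z ∈ blockUnitriangular ‖W.toBlocks₂₁‖ r := by
  rw [Wom_eq_fromBlocks hA hAreg hWreg] at hr ⊢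
  refine ⟨_, _, rfl, ?_, by simpa using hr⟩
  calc ‖W.toBlocks₂₁ * Dmat (z ∘ Sum.inl)‖ ≤ ‖W.toBlocks₂₁‖ * ‖Dmat (z ∘ Sum.inl)‖ :=
        l2_opNorm_mul _ _
    _ ≤ ‖W.toBlocks₂₁‖ := mul_le_of_le_one_right (norm_nonneg _) (l2_opNorm_Dmat_le _)

end RegularizedPLRNN

theorem regularized_jacobian_products_bounded_general {p q : ℕ} (hp : 1 ≤ p)
    (A W : Matrix (Fin p ⊕ Fin q) (Fin p ⊕ Fin q) ℝ)
    (hA : A.IsDiag) (hAreg : ∀ i : Fin p, A (Sum.inl i) (Sum.inl i) = 1)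
    (hWreg : ∀ (i : Fin p) (j : Fin p ⊕ Fin q), W (Sum.inl i) j = 0)
    (z : ℕ → Fin p ⊕ Fin q → ℝ)
    (t : ℕ) (c : ℝ) (hc : c < 1)
    (hR : ∀ k, t < k → opNorm2 ((Wom A W (z k)).toBlocks₂₂) ≤ c) :
    ∀ T, t < T →
      1 ≤ opNorm2 (((List.range (T - t)).map (fun i => Wom A W (z (T - i)))).prod)
      ∧ opNorm2 (((List.range (T - t)).map (fun i => Wom A W (z (T - i)))).prod)
          ≤ 1 + c + opNorm2 W.toBlocks₂₁ / (1 - c) := by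
  intro T hT
  have : Nonempty (Fin p) := ⟨⟨0, hp⟩⟩
  simp only [opNorm2_eq_norm] at hR ⊢
  have hc₀ : 0 ≤ c := (norm_nonneg _).trans (hR (t + 1) (by omega))
  have hprod := list_prod_mem_blockUnitriangular (norm_nonneg W.toBlocks₂₁) hc
    ((List.range (T - t)).map fun i => Wom A W (z (T - i))) (by
      simp only [List.mem_map, List.mem_range]
      rintro _ ⟨i, hi, rfl⟩
      exact Wom_mem_blockUnitriangular hA hAreg hWreg (hR _ (by omega)))
  rw [List.length_map, List.length_range] at hprod
  refine ⟨one_le_l2_opNorm_of_mem_blockUnitriangular hprod, ?_⟩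
  calc _ ≤ 1 + c ^ (T - t) + ‖W.toBlocks₂₁‖ / (1 - c) :=
        l2_opNorm_le_of_mem_blockUnitriangular hprod
    _ ≤ 1 + c + ‖W.toBlocks₂₁‖ / (1 - c) := by
        gcongr
        exact pow_le_of_le_one hc₀ hc.le (by omega)

/-- Theorem 2: uniform bounds on Jacobian products. States are indexed by
`Fin p ⊕ Fin q` with the regularized ('memory') subsystem `Fin p` (so `M_reg = p`,
`M - M_reg = q`): `A` is diagonal with `A i i = 1` on the regularized block, and the first
`p` rows of `W` vanish.  If along the orbit `‖R(z k)‖₂ ≤ c < 1` for all `k > t`, where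
`R(z) = (W_Ω(z))₂₂` is the non-regularized block of the Jacobian, then for all `T > t`,
`1 ≤ ‖W_Ω(z T) ⋯ W_Ω(z (t+1))‖₂ ≤ 1 + c + ‖S‖₂ / (1 - c)` where `S = W₂₁`. -/
theorem regularized_jacobian_products_bounded {p q : ℕ} (hp : 1 ≤ p) (hq : 1 ≤ q)
    (A W : Matrix (Fin p ⊕ Fin q) (Fin p ⊕ Fin q) ℝ)
    (hA : A.IsDiag) (hAreg : ∀ i : Fin p, A (Sum.inl i) (Sum.inl i) = 1)
    (hWd : ∀ i, W i i = 0) (hWreg : ∀ (i : Fin p) (j : Fin p ⊕ Fin q), W (Sum.inl i) j = 0)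
    (h : Fin p ⊕ Fin q → ℝ)
    (z : ℕ → Fin p ⊕ Fin q → ℝ) (horb : ∀ t', 1 ≤ t' → z (t' + 1) = plrnn A W h (z t'))
    (t : ℕ) (ht : 1 ≤ t) (c : ℝ) (hc : c < 1)
    (hR : ∀ k, t < k → opNorm2 ((Wom A W (z k)).toBlocks₂₂) ≤ c) :
    ∀ T, t < T →
      1 ≤ opNorm2 (((List.range (T - t)).map (fun i => Wom A W (z (T - i)))).prod)
      ∧ opNorm2 (((List.range (T - t)).map (fun i => Wom A W (z (T - i)))).prod)
          ≤ 1 + c + opNorm2 W.toBlocks₂₁ / (1 - c) :=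
  regularized_jacobian_products_bounded_general hp A W hA hAreg hWreg z t c hc hR
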